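/- arXiv:2008.02269 — 2 statements merged into one kernel-verified Lean document; each statement's English description precedes it below -/
import Mathlib

section
/- In the planted submatrix setting, if the multigraph α has a nonempty connected component that does not contain vertex 1 (in particular, if α is disconnected), then κ_α = 0, where κ_α is defined by the recursion κ_α = E[x·X^α] − Σ_{0 ≤ β ⪇ α} κ_β·binom(α,β)·E[X^{α−β}] with base case κ_0 = E[x]. -/
variable {n : ℕ}

/-- Number of edges of a multigraph (with multiplicity), where the multigraph on `[n]`
is given by edge multiplicities `α : Sym2 (Fin n) → ℕ` (self-loops allowed). -/
def mgEdges (α : Sym2 (Fin n) → ℕ) : ℕ := ∑ e, α e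

/-- The set of vertices spanned by the multigraph `α`. -/
def mgVerts (α : Sym2 (Fin n) → ℕ) : Set (Fin n) := {v | ∃ e, α e ≠ 0 ∧ v ∈ e}

/-- The multigraph `α` is connected: any two spanned vertices are joined by a path of edges. -/
def mgConnected (α : Sym2 (Fin n) → ℕ) : Prop :=
  ∀ u ∈ mgVerts α, ∀ v ∈ mgVerts α,
    Relation.ReflTransGen (fun a b => α s(a, b) ≠ 0) u v

/-- `E[X^α] = λ^{|α|}·ρ^{|V(α)|}` in the planted submatrix model, where `X_{ij} = λ v_i v_j`
with `v` i.i.d. `Bernoulli(ρ)`. -/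
noncomputable def momX (lam ρ : ℝ) (α : Sym2 (Fin n) → ℕ) : ℝ :=
  lam ^ mgEdges α * ρ ^ (mgVerts α).ncard

/-- `E[x·X^α] = λ^{|α|}·ρ^{|V(α)∪{1}|}` in the planted submatrix model, where `x = v_1`. -/
noncomputable def momxX (lam ρ : ℝ) (v1 : Fin n) (α : Sym2 (Fin n) → ℕ) : ℝ :=
  lam ^ mgEdges α * ρ ^ (insert v1 (mgVerts α)).ncard

/-- `κ` satisfies the defining recursion of the cumulant quantities `κ_α`:
`κ_α = E[x X^α] − Σ_{0 ≤ β ⪇ α} κ_β·binom(α,β)·E[X^{α−β}]`. -/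
def KappaRec (lam ρ : ℝ) (v1 : Fin n) (κ : (Sym2 (Fin n) → ℕ) → ℝ) : Prop :=
  ∀ α : Sym2 (Fin n) → ℕ,
    κ α = momxX lam ρ v1 α
      - ∑ β ∈ (Finset.Icc 0 α).erase α,
          κ β * (∏ e, ((α e).choose (β e) : ℝ)) * momX lam ρ (fun e => α e - β e)

/-!
Let `R` be the set of vertices reachable from vertex `1` in `α`. Splitting `α = γ + δ` into the
edges inside `R` and the rest gives two multigraphs on disjoint vertex sets with `1 ∉ V(δ)`, so
`E[x X^α] = E[x X^γ] E[X^δ]` and `E[X^{α-β}] = E[X^{γ-β}] E[X^δ]` for `β ≤ γ`. Comparing the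
moment–cumulant expansion of `E[x X^α]` with `E[X^δ]` times that of `E[x X^γ]` leaves
`κ_α = 0`, once `κ_β = 0` is known for every `β < α` with `β ≰ γ`; such a `β` has an edge
leaving `R`, hence a vertex unreachable from `1`, and strong induction applies.
-/

open Finset

lemma mgEdges_add (γ δ : Sym2 (Fin n) → ℕ) : mgEdges (γ + δ) = mgEdges γ + mgEdges δ :=
  sum_add_distrib

@[simp]
lemma mgEdges_zero : mgEdges (0 : Sym2 (Fin n) → ℕ) = 0 :=
  sum_const_zero

lemma mgVerts_add (γ δ : Sym2 (Fin n) → ℕ) : mgVerts (γ + δ) = mgVerts γ ∪ mgVerts δ := by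
  ext v
  simp only [mgVerts, Set.mem_ofPred_eq, Set.mem_union, Pi.add_apply, ne_eq,
    Nat.add_eq_zero_iff, not_and_or, or_and_right, exists_or]

@[simp]
lemma mgVerts_zero : mgVerts (0 : Sym2 (Fin n) → ℕ) = ∅ := by
  simp [mgVerts]

lemma mgVerts_mono {β α : Sym2 (Fin n) → ℕ} (h : β ≤ α) : mgVerts β ⊆ mgVerts α :=
  fun _ ⟨e, he, hv⟩ => ⟨e, fun h0 => he (Nat.eq_zero_of_le_zero (h0 ▸ h e)), hv⟩

lemma eq_zero_or_eq_zero_of_disjoint_mgVerts {γ δ : Sym2 (Fin n) → ℕ}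
    (hdisj : Disjoint (mgVerts γ) (mgVerts δ)) (e : Sym2 (Fin n)) : γ e = 0 ∨ δ e = 0 := by
  induction e using Sym2.ind with
  | _ a b =>
    by_contra! h
    exact Set.disjoint_left.mp hdisj ⟨_, h.1, Sym2.mem_mk_left a b⟩ ⟨_, h.2, Sym2.mem_mk_left a b⟩

lemma momX_zero (lam ρ : ℝ) : momX lam ρ (0 : Sym2 (Fin n) → ℕ) = 1 := by
  simp [momX]

lemma momX_add_of_disjoint (lam ρ : ℝ) {γ δ : Sym2 (Fin n) → ℕ}
    (hdisj : Disjoint (mgVerts γ) (mgVerts δ)) :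
    momX lam ρ (γ + δ) = momX lam ρ γ * momX lam ρ δ := by
  rw [momX, momX, momX, mgEdges_add, mgVerts_add, Set.ncard_union_eq hdisj, pow_add, pow_add]
  ring

lemma momxX_add_of_disjoint (lam ρ : ℝ) (v1 : Fin n) {γ δ : Sym2 (Fin n) → ℕ}
    (hdisj : Disjoint (mgVerts γ) (mgVerts δ)) (hv1 : v1 ∉ mgVerts δ) :
    momxX lam ρ v1 (γ + δ) = momxX lam ρ v1 γ * momX lam ρ δ := by
  have hdisj' : Disjoint (insert v1 (mgVerts γ)) (mgVerts δ) :=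
    Set.disjoint_insert_left.mpr ⟨hv1, hdisj⟩
  rw [momxX, momxX, momX, mgEdges_add, mgVerts_add, ← Set.insert_union,
    Set.ncard_union_eq hdisj', pow_add, pow_add]
  ring

lemma KappaRec.momxX_eq_sum {lam ρ : ℝ} {v1 : Fin n} {κ : (Sym2 (Fin n) → ℕ) → ℝ}
    (hκ : KappaRec lam ρ v1 κ) (α : Sym2 (Fin n) → ℕ) :
    momxX lam ρ v1 α =
      ∑ β ∈ Icc 0 α, κ β * (∏ e, ((α e).choose (β e) : ℝ)) * momX lam ρ (α - β) := by
  rw [← sum_erase_add _ _ (mem_Icc.mpr ⟨zero_le, le_rfl⟩), hκ α]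
  simp only [Nat.choose_self, Nat.cast_one, prod_const_one, mul_one, tsub_self, momX_zero]
  exact (add_sub_cancel _ _).symm

lemma prod_choose_add_of_disjoint {γ δ β : Sym2 (Fin n) → ℕ}
    (hdisj : Disjoint (mgVerts γ) (mgVerts δ)) (hβ : β ≤ γ) :
    ∏ e, (((γ + δ) e).choose (β e) : ℝ) = ∏ e, ((γ e).choose (β e) : ℝ) := by
  refine prod_congr rfl fun e _ => ?_
  rcases eq_zero_or_eq_zero_of_disjoint_mgVerts hdisj e with hγ | hδ
  · have hβe : β e = 0 := Nat.eq_zero_of_le_zero (hγ ▸ hβ e)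
    simp [hγ, hβe]
  · simp [hδ]

lemma momX_add_sub_of_disjoint (lam ρ : ℝ) {γ δ β : Sym2 (Fin n) → ℕ}
    (hdisj : Disjoint (mgVerts γ) (mgVerts δ)) (hβ : β ≤ γ) :
    momX lam ρ (γ + δ - β) = momX lam ρ (γ - β) * momX lam ρ δ := by
  rw [← momX_add_of_disjoint lam ρ (hdisj.mono_left (mgVerts_mono tsub_le_self)),
    tsub_add_eq_add_tsub hβ]

theorem KappaRec.eq_zero_of_add {lam ρ : ℝ} {v1 : Fin n} {κ : (Sym2 (Fin n) → ℕ) → ℝ}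
    (hκ : KappaRec lam ρ v1 κ) {γ δ : Sym2 (Fin n) → ℕ}
    (hdisj : Disjoint (mgVerts γ) (mgVerts δ)) (hv1 : v1 ∉ mgVerts δ) (hδ : δ ≠ 0)
    (hlower : ∀ β < γ + δ, ¬ β ≤ γ → κ β = 0) : κ (γ + δ) = 0 := by
  set term : (Sym2 (Fin n) → ℕ) → ℝ := fun β =>
    κ β * (∏ e, (((γ + δ) e).choose (β e) : ℝ)) * momX lam ρ (γ + δ - β)
  have hγ : γ ≤ γ + δ := le_self_add
  have hlow : ∑ β ∈ Icc 0 γ, term β = momxX lam ρ v1 γ * momX lam ρ δ := by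
    rw [hκ.momxX_eq_sum γ, sum_mul]
    refine sum_congr rfl fun β hβ => ?_
    have hβγ := (mem_Icc.mp hβ).2
    simp only [term, prod_choose_add_of_disjoint hdisj hβγ,
      momX_add_sub_of_disjoint lam ρ hdisj hβγ]
    ring
  have hhigh : ∑ β ∈ Icc 0 (γ + δ) \ Icc 0 γ, term β = κ (γ + δ) := by
    have hmem : γ + δ ∈ Icc 0 (γ + δ) \ Icc 0 γ := by
      refine mem_sdiff.mpr ⟨mem_Icc.mpr ⟨zero_le, le_rfl⟩, fun h => hδ (funext fun e => ?_)⟩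
      simpa using (mem_Icc.mp h).2 e
    rw [sum_eq_single_of_mem _ hmem fun β hβ hne => ?_]
    · simp [term, momX_zero]
    · simp only [mem_sdiff, mem_Icc] at hβ
      simp [term, hlower β (lt_of_le_of_ne hβ.1.2 hne) (fun h => hβ.2 ⟨hβ.1.1, h⟩)]
  have hsum := hκ.momxX_eq_sum (γ + δ)
  rw [← sum_sdiff (Icc_subset_Icc_right hγ), hhigh, hlow,
    momxX_add_of_disjoint lam ρ v1 hdisj hv1] at hsum
  linarith

section Component

variable {α : Sym2 (Fin n) → ℕ} {R : Set (Fin n)}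

lemma mgVerts_indicator_sym2_subset : mgVerts (R.sym2.indicator α) ⊆ R :=
  fun _ ⟨_, he, hv⟩ => Set.mem_sym2_iff_subset.mp (Set.mem_of_indicator_ne_zero he) hv

lemma mgVerts_indicator_compl_sym2_subset (hR : ∀ a b, α s(a, b) ≠ 0 → a ∈ R → b ∈ R) :
    mgVerts ((R.sym2)ᶜ.indicator α) ⊆ Rᶜ := by
  rintro v ⟨e, he, hv⟩ hvR
  obtain ⟨heR, hαe⟩ := Set.indicator_apply_ne_zero.mp he
  obtain ⟨w, rfl⟩ := Sym2.mem_iff_exists.mp hv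
  exact heR ⟨hvR, hR v w hαe hvR⟩

lemma disjoint_mgVerts_indicator_sym2 (hR : ∀ a b, α s(a, b) ≠ 0 → a ∈ R → b ∈ R) :
    Disjoint (mgVerts (R.sym2.indicator α)) (mgVerts ((R.sym2)ᶜ.indicator α)) :=
  Set.disjoint_of_subset mgVerts_indicator_sym2_subset
    (mgVerts_indicator_compl_sym2_subset hR) disjoint_compl_right

lemma indicator_compl_sym2_ne_zero {u : Fin n} (hu : u ∈ mgVerts α) (huR : u ∉ R) :
    (R.sym2)ᶜ.indicator α ≠ 0 := by
  obtain ⟨e, he, hue⟩ := hu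
  have heR : e ∈ (R.sym2)ᶜ := fun heR => huR (Set.mem_sym2_iff_subset.mp heR hue)
  exact fun h => he (by rw [← Set.indicator_of_mem heR α, h, Pi.zero_apply])

lemma exists_mem_mgVerts_notMem_of_not_le_indicator_sym2 {β : Sym2 (Fin n) → ℕ}
    (hβ : β ≤ α) (h : ¬ β ≤ R.sym2.indicator α) : ∃ w ∈ mgVerts β, w ∉ R := by
  obtain ⟨e, he⟩ : ∃ e, R.sym2.indicator α e < β e := by
    simpa only [Pi.le_def, not_forall, not_le] using h
  have heR : e ∉ R.sym2 := fun heR => (Set.indicator_of_mem heR α ▸ he).not_ge (hβ e)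
  obtain ⟨w, hw, hwR⟩ := Set.not_subset.mp (mt Set.mem_sym2_iff_subset.mpr heR)
  exact ⟨w, ⟨e, (pos_of_gt he).ne', hw⟩, hwR⟩

end Component

theorem kappa_eq_zero_of_disconnected_general {n : ℕ} (hn : 0 < n) (lam ρ : ℝ)
    (κ : (Sym2 (Fin n) → ℕ) → ℝ)
    (hκ : KappaRec lam ρ (⟨0, hn⟩ : Fin n) κ)
    (α : Sym2 (Fin n) → ℕ)
    (hdis : ∃ u ∈ mgVerts α,
      ¬ Relation.ReflTransGen (fun a b => α s(a, b) ≠ 0) (⟨0, hn⟩ : Fin n) u) :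
    κ α = 0 := by
  induction α using WellFoundedLT.induction with
  | _ α ih =>
  obtain ⟨u, hu, hur⟩ := hdis
  set R := {v | Relation.ReflTransGen (fun a b => α s(a, b) ≠ 0) ⟨0, hn⟩ v}
  have hR : ∀ a b, α s(a, b) ≠ 0 → a ∈ R → b ∈ R := fun _ _ hab ha => ha.tail hab
  have hsplit := Set.indicator_self_add_compl R.sym2 α
  rw [← hsplit]
  refine hκ.eq_zero_of_add (disjoint_mgVerts_indicator_sym2 hR)
    (fun h => mgVerts_indicator_compl_sym2_subset hR h .refl)
    (indicator_compl_sym2_ne_zero hu hur) fun β hβ hβγ => ih β (hsplit ▸ hβ) ?_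
  have hβα : β ≤ α := hsplit ▸ hβ.le
  obtain ⟨w, hw, hwR⟩ := exists_mem_mgVerts_notMem_of_not_le_indicator_sym2 hβα hβγ
  refine ⟨w, hw, fun hreach => hwR (Relation.ReflTransGen.mono ?_ _ _ hreach)⟩
  exact fun a b hab hα => hab (Nat.eq_zero_of_le_zero (hα ▸ hβα s(a, b)))

/-- **Lemma 3.2 (disconnected cumulants vanish).** If the multigraph `α` has a nonempty
connected component not containing vertex `1` (equivalently, some spanned vertex is not
reachable from vertex `1`), then `κ_α = 0`. -/
theorem kappa_eq_zero_of_disconnected {n : ℕ} (hn : 0 < n) (lam ρ : ℝ)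
    (hlam : 0 ≤ lam) (hρ0 : 0 < ρ) (hρ1 : ρ ≤ 1)
    (κ : (Sym2 (Fin n) → ℕ) → ℝ)
    (hκ : KappaRec lam ρ (⟨0, hn⟩ : Fin n) κ)
    (α : Sym2 (Fin n) → ℕ)
    (hdis : ∃ u ∈ mgVerts α,
      ¬ Relation.ReflTransGen (fun a b => α s(a, b) ≠ 0) (⟨0, hn⟩ : Fin n) u) :
    κ α = 0 :=
  kappa_eq_zero_of_disconnected_general hn lam ρ κ hκ α hdis
end

section
/- For integers d ≥ 1 and 1 ≤ u ≤ d+1, the number of connected multigraphs α on vertex set {1,…,n} (self-loops allowed) with exactly d edges, with 1 ∈ V(α), and with exactly u spanned vertices, is at most 2·(e·n)^{u−1}·(3d²)^{d−u+1}. -/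
/-!
Take a spanning tree of `α` rooted at vertex `0` by letting every other spanned vertex point to
a neighbour strictly closer to the root; the parent edges are then `u - 1` distinct edges of `α`.
So `α` is determined by its vertex set `S ∋ 0` (at most `C(n, u - 1)` choices), the parent map
`S \ {0} → S` (`u ^ (u - 1)` choices) and the multiset of the remaining `d + 1 - u` edges
inside `S` (at most `(u (u + 1) / 2) ^ (d + 1 - u)` choices). Finally
`C(n, k) (k + 1) ^ k ≤ (e n) ^ k` because `(k + 1) ^ k ≤ k! e ^ k`, and `u (u + 1) / 2 ≤ 3 d ^ 2`
as soon as there is an extra edge.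
-/

variable {n : ℕ}

open Finset

theorem SimpleGraph.Reachable.exists_adj_dist_lt {V : Type*} {G : SimpleGraph V} {u v : V}
    (h : G.Reachable u v) (hne : u ≠ v) : ∃ w, G.Adj u w ∧ G.dist w v < G.dist u v := by
  obtain ⟨p, hp⟩ := h.exists_walk_length_eq_dist
  cases p with
  | nil => exact absurd rfl hne
  | cons hadj q =>
    refine ⟨_, hadj, ?_⟩
    have := SimpleGraph.dist_le q
    rw [SimpleGraph.Walk.length_cons] at hp
    omega

theorem Set.injOn_sym2_mk_of_lt {V : Type*} {s : Set V} {p : V → V} {h : V → ℕ}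
    (hp : ∀ v ∈ s, h (p v) < h v) : s.InjOn fun v => s(v, p v) := by
  intro v hv w hw hvw
  rcases Sym2.eq_iff.1 hvw with ⟨hvw, -⟩ | ⟨hv_eq, hw_eq⟩
  · exact hvw
  · have hv_lt := hp v hv
    have hw_lt := hp w hw
    rw [hw_eq] at hv_lt
    rw [← hv_eq] at hw_lt
    omega

instance Sym2.canLiftSubtype {V : Type*} (p : V → Prop) :
    CanLift (Sym2 V) (Sym2 (Subtype p)) (Sym2.map Subtype.val) (fun e => ∀ x ∈ e, p x) where
  prf e he := by
    induction e using Sym2.ind with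
    | _ a b => exact ⟨s(⟨a, he a (Sym2.mem_mk_left a b)⟩, ⟨b, he b (Sym2.mem_mk_right a b)⟩), rfl⟩

theorem Fintype.card_sym_le_pow (V : Type*) [Fintype V] [DecidableEq V] (k : ℕ) :
    Fintype.card (Sym V k) ≤ Fintype.card V ^ k := by
  rw [← card_vector]
  exact Fintype.card_le_of_surjective Sym.ofVector fun s =>
    ⟨⟨s.1.toList, by simp⟩, Sym.ext (by simp [Sym.ofVector])⟩

theorem Set.ncard_le_card_of_subset_range {α β : Type*} [Finite α] {s : Set β} {f : α → β}
    (h : s ⊆ Set.range f) : s.ncard ≤ Nat.card α := by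
  calc s.ncard ≤ (Set.range f).ncard := Set.ncard_le_ncard h (Set.finite_range f)
    _ ≤ Nat.card α := by
      rw [← Set.image_univ, ← Set.ncard_univ α]
      exact Set.ncard_image_le Set.finite_univ

theorem Finset.card_filter_mem_powersetCard_le {α : Type*} [DecidableEq α] (s : Finset α) (a : α)
    (k : ℕ) : #((powersetCard k s).filter (a ∈ ·)) ≤ s.card.choose (k - 1) := by
  rw [← card_powersetCard]
  refine card_le_card_of_injOn (·.erase a) (fun t ht => ?_) (fun t ht t' ht' htt' => ?_)
  · obtain ⟨ht, hat⟩ := mem_filter.1 ht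
    obtain ⟨hts, htk⟩ := mem_powersetCard.1 ht
    exact mem_powersetCard.2 ⟨(erase_subset a t).trans hts, by rw [card_erase_of_mem hat, htk]⟩
  · rw [← insert_erase (mem_filter.1 ht).2, ← insert_erase (mem_filter.1 ht').2]
    exact congrArg (insert a) htt'

def mgSupportGraph (α : Sym2 (Fin n) → ℕ) : SimpleGraph (Fin n) :=
  SimpleGraph.fromEdgeSet {e | α e ≠ 0}

noncomputable def mgEdgeMultiset (α : Sym2 (Fin n) → ℕ) : Multiset (Sym2 (Fin n)) :=
  Finsupp.toMultiset (Finsupp.equivFunOnFinite.symm α)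

theorem count_mgEdgeMultiset (α : Sym2 (Fin n) → ℕ) (e : Sym2 (Fin n)) :
    (mgEdgeMultiset α).count e = α e := by
  simp [mgEdgeMultiset]

theorem card_mgEdgeMultiset (α : Sym2 (Fin n) → ℕ) :
    Multiset.card (mgEdgeMultiset α) = mgEdges α := by
  simp [mgEdgeMultiset, Finsupp.card_toMultiset, mgEdges, Finsupp.sum_fintype]

section
variable {α : Sym2 (Fin n) → ℕ} {r : Fin n}

theorem mem_mgVerts_of_mem_mgEdgeMultiset {e : Sym2 (Fin n)} (he : e ∈ mgEdgeMultiset α)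
    {x : Fin n} (hx : x ∈ e) : x ∈ mgVerts α := by
  rw [← Multiset.count_ne_zero, count_mgEdgeMultiset] at he
  exact ⟨e, he, hx⟩

theorem mgConnected.reachable (h : mgConnected α) {u v : Fin n} (hu : u ∈ mgVerts α)
    (hv : v ∈ mgVerts α) : (mgSupportGraph α).Reachable u v := by
  rw [mgSupportGraph, SimpleGraph.reachable_fromEdgeSet_eq_reflTransGen_toRel]
  exact h u hu v hv

theorem mgConnected.exists_parent (h : mgConnected α) (hr : r ∈ mgVerts α) :
    ∃ p : Fin n → Fin n, ∃ height : Fin n → ℕ,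
      ∀ v ∈ mgVerts α, v ≠ r → α s(v, p v) ≠ 0 ∧ height (p v) < height v := by
  have hparent : ∀ v, ∃ w, v ∈ mgVerts α → v ≠ r →
      α s(v, w) ≠ 0 ∧ (mgSupportGraph α).dist w r < (mgSupportGraph α).dist v r := by
    intro v
    by_cases hv : v ∈ mgVerts α ∧ v ≠ r
    · obtain ⟨w, hadj, hlt⟩ := (h.reachable hv.1 hr).exists_adj_dist_lt hv.2
      exact ⟨w, fun _ _ => ⟨((SimpleGraph.fromEdgeSet_adj _).1 hadj).1, hlt⟩⟩
    · exact ⟨v, fun h₁ h₂ => absurd ⟨h₁, h₂⟩ hv⟩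
  choose p hp using hparent
  exact ⟨p, fun v => (mgSupportGraph α).dist v r, hp⟩

theorem mgConnected.exists_parent_le (h : mgConnected α) (hr : r ∈ mgVerts α)
    {S : Finset (Fin n)} (hS : mgVerts α = S) :
    ∃ p : Fin n → Fin n, (∀ v ∈ S.erase r, p v ∈ S) ∧
      (S.erase r).val.map (fun v => s(v, p v)) ≤ mgEdgeMultiset α := by
  obtain ⟨p, height, hp⟩ := h.exists_parent hr
  have hp' : ∀ v ∈ S.erase r, α s(v, p v) ≠ 0 ∧ height (p v) < height v := fun v hv =>
    hp v (hS ▸ (mem_erase.1 hv).2) (mem_erase.1 hv).1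
  refine ⟨p, fun v hv => ?_, ?_⟩
  · rw [← mem_coe, ← hS]
    exact ⟨_, (hp' v hv).1, Sym2.mem_mk_right v (p v)⟩
  · have hinj := Set.injOn_sym2_mk_of_lt fun v hv => (hp' v (mem_coe.1 hv)).2
    rw [Multiset.le_iff_subset ((S.erase r).nodup.map_on fun v hv w hw => hinj hv hw)]
    intro e he
    obtain ⟨v, hv, rfl⟩ := Multiset.mem_map.1 he
    rw [← Multiset.count_ne_zero, count_mgEdgeMultiset]
    exact (hp' v hv).1

abbrev TreeExtraCode (r : Fin n) (S : Finset (Fin n)) (m : ℕ) : Type :=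
  (S.erase r → S) × Sym (Sym2 S) m

def TreeExtraCode.decode {r : Fin n} {S : Finset (Fin n)} {m : ℕ} (c : TreeExtraCode r S m) :
    Sym2 (Fin n) → ℕ :=
  fun e => ((S.erase r).attach.val.map (fun v => s(v.1, (c.1 v).1)) +
    (c.2 : Multiset (Sym2 S)).map (Sym2.map Subtype.val)).count e

theorem mgConnected.exists_decode_eq (h : mgConnected α) (hr : r ∈ mgVerts α)
    {S : Finset (Fin n)} (hS : mgVerts α = S) {m : ℕ} (hm : mgEdges α + 1 - S.card = m) :
    ∃ c : TreeExtraCode r S m, c.decode = α := by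
  obtain ⟨p, hpS, hle⟩ := h.exists_parent_le hr hS
  set T := (S.erase r).val.map (fun v => s(v, p v))
  have hrest : ∀ e ∈ mgEdgeMultiset α - T, ∀ x ∈ e, x ∈ S := fun e he x hx => by
    rw [← mem_coe, ← hS]
    exact mem_mgVerts_of_mem_mgEdgeMultiset (Multiset.mem_of_le (Multiset.sub_le_self _ _) he) hx
  obtain ⟨R, hR⟩ : ∃ R : Multiset (Sym2 S), R.map (Sym2.map Subtype.val) = mgEdgeMultiset α - T :=
    CanLift.prf _ hrest
  have hcard : Multiset.card R = m := by
    have hrS : r ∈ S := mem_coe.1 (hS ▸ hr)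
    have hT : Multiset.card T = S.card - 1 := by
      simp only [T, Multiset.card_map, card_val, card_erase_of_mem hrS]
    have hR_card := Multiset.card_sub hle
    rw [← hR, Multiset.card_map] at hR_card
    rw [hR_card, card_mgEdgeMultiset, hT, ← hm]
    have hS_pos := card_pos.2 ⟨r, hrS⟩
    omega
  refine ⟨⟨fun v => ⟨p v, hpS v v.2⟩, R, hcard⟩, funext fun e => ?_⟩
  have hTree : (S.erase r).attach.val.map (fun v => s(v.1, p v.1)) = T := by
    rw [attach_val]
    exact Multiset.attach_map_val' (S.erase r).val fun v => s(v, p v)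
  rw [TreeExtraCode.decode, Sym.coe_mk, hR, hTree, add_tsub_cancel_of_le hle, count_mgEdgeMultiset]

end

theorem card_treeExtraCode_le {r : Fin n} {S : Finset (Fin n)} (hr : r ∈ S) (m : ℕ) :
    Fintype.card (TreeExtraCode r S m) ≤
      S.card ^ (S.card - 1) * (S.card + 1).choose 2 ^ m := by
  rw [Fintype.card_prod, Fintype.card_fun, Fintype.card_coe, Fintype.card_coe,
    card_erase_of_mem hr]
  gcongr
  exact (Fintype.card_sym_le_pow _ m).trans (by rw [Sym2.card, Fintype.card_coe])

theorem ncard_connected_multigraphs_le (r : Fin n) (d u : ℕ) :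
    {α : Sym2 (Fin n) → ℕ |
        mgEdges α = d ∧ mgConnected α ∧ r ∈ mgVerts α ∧ (mgVerts α).ncard = u}.ncard ≤
      n.choose (u - 1) * (u ^ (u - 1) * (u + 1).choose 2 ^ (d + 1 - u)) := by
  set 𝒮 := (powersetCard u (univ : Finset (Fin n))).filter (r ∈ ·)
  let decode (c : Σ S : 𝒮, TreeExtraCode r S.1 (d + 1 - u)) : Sym2 (Fin n) → ℕ := c.2.decode
  have hcover : {α : Sym2 (Fin n) → ℕ |
      mgEdges α = d ∧ mgConnected α ∧ r ∈ mgVerts α ∧ (mgVerts α).ncard = u} ⊆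
        Set.range decode := by
    rintro α ⟨hd, hc, hr, hu⟩
    obtain ⟨S, hS⟩ := (mgVerts α).toFinite.exists_finset_coe
    rw [← hS, Set.ncard_coe_finset] at hu
    obtain ⟨c, hα⟩ := hc.exists_decode_eq hr hS.symm (by rw [hd, hu])
    have hS𝒮 : S ∈ 𝒮 :=
      mem_filter.2 ⟨mem_powersetCard.2 ⟨subset_univ S, hu⟩, by rwa [← mem_coe, hS]⟩
    exact ⟨⟨⟨S, hS𝒮⟩, c⟩, hα⟩
  calc _ ≤ Nat.card (Σ S : 𝒮, TreeExtraCode r S.1 (d + 1 - u)) :=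
        Set.ncard_le_card_of_subset_range hcover
    _ ≤ #𝒮 * (u ^ (u - 1) * (u + 1).choose 2 ^ (d + 1 - u)) := by
        rw [Nat.card_eq_fintype_card, Fintype.card_sigma, ← Fintype.card_coe 𝒮, ← card_univ,
          ← smul_eq_mul]
        refine sum_le_card_nsmul _ _ _ fun S _ => ?_
        obtain ⟨hS, hrS⟩ := mem_filter.1 S.2
        rw [← (mem_powersetCard.1 hS).2]
        exact card_treeExtraCode_le hrS _
    _ ≤ _ := by
        gcongr
        simpa using card_filter_mem_powersetCard_le univ r u

theorem add_one_pow_le_factorial_mul_exp (k : ℕ) :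
    ((k : ℝ) + 1) ^ k ≤ k.factorial * Real.exp 1 ^ k := by
  induction k with
  | zero => simp
  | succ k ih =>
    have hsplit : ((↑(k + 1) : ℝ) + 1) = (k + 1) * (1 + ((k + 1 : ℕ) : ℝ)⁻¹) := by
      push_cast
      field_simp
    calc ((↑(k + 1) : ℝ) + 1) ^ (k + 1)
        = (k + 1) * ((k + 1) ^ k * (1 + ((k + 1 : ℕ) : ℝ)⁻¹) ^ (k + 1)) := by
          rw [hsplit, mul_pow, pow_succ]
          ring
      _ ≤ (k + 1) * ((k.factorial * Real.exp 1 ^ k) * Real.exp 1) := by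
          gcongr
          exact Real.one_add_inv_pow_le_exp
      _ = (k + 1).factorial * Real.exp 1 ^ (k + 1) := by
          push_cast [Nat.factorial_succ]
          ring

theorem choose_mul_add_one_pow_le (n k : ℕ) :
    (n.choose k : ℝ) * (k + 1) ^ k ≤ (Real.exp 1 * n) ^ k := by
  calc (n.choose k : ℝ) * (k + 1) ^ k
        ≤ (n ^ k / k.factorial) * (k.factorial * Real.exp 1 ^ k) := by
          gcongr
          · exact Nat.choose_le_pow_div k n
          · exact add_one_pow_le_factorial_mul_exp k
    _ = (Real.exp 1 * n) ^ k := by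
        field_simp
        ring

/- The two exponents differ (by truncated subtraction) only at `u = d + 1`, which is where
`1 ≤ d` is needed. -/
theorem choose_two_pow_le {d u : ℕ} (hd : 1 ≤ d) (hu : u ≤ d + 1) :
    (u + 1).choose 2 ^ (d + 1 - u) ≤ (3 * d ^ 2) ^ (d - u + 1) := by
  calc (u + 1).choose 2 ^ (d + 1 - u) ≤ (3 * d ^ 2) ^ (d + 1 - u) := by
        rcases Nat.eq_zero_or_pos (d + 1 - u) with h | h
        · rw [h, pow_zero, pow_zero]
        · gcongr
          have hud : u ≤ d := by omega
          have hsq : u * u ≤ d * d := Nat.mul_le_mul hud hud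
          have hd_sq : d ≤ d ^ 2 := Nat.le_self_pow two_ne_zero d
          rw [Nat.choose_two_right, Nat.add_sub_cancel]
          have hprod : (u + 1) * u ≤ 6 * d ^ 2 := by nlinarith
          omega
    _ ≤ (3 * d ^ 2) ^ (d - u + 1) := Nat.pow_le_pow_right (by positivity) (by omega)

theorem count_connected_multigraphs_refined_general {n : ℕ} (hn : 0 < n) (d u : ℕ) (hd : 1 ≤ d)
    (hu2 : u ≤ d + 1) :
    ((Set.ncard {α : Sym2 (Fin n) → ℕ |
        mgEdges α = d ∧ mgConnected α ∧ (⟨0, hn⟩ : Fin n) ∈ mgVerts α ∧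
        (mgVerts α).ncard = u} : ℕ) : ℝ)
      ≤ 2 * (Real.exp 1 * n) ^ (u - 1) * (3 * (d : ℝ) ^ 2) ^ (d - u + 1) := by
  have htree : (n.choose (u - 1) : ℝ) * u ^ (u - 1) ≤ (Real.exp 1 * n) ^ (u - 1) := by
    have hu : (u : ℝ) ≤ ((u - 1 : ℕ) : ℝ) + 1 := by
      norm_cast
      omega
    calc (n.choose (u - 1) : ℝ) * u ^ (u - 1)
        ≤ n.choose (u - 1) * (((u - 1 : ℕ) : ℝ) + 1) ^ (u - 1) := by gcongr
      _ ≤ _ := choose_mul_add_one_pow_le n (u - 1)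
  have hextra : (((u + 1).choose 2 ^ (d + 1 - u) : ℕ) : ℝ) ≤ (3 * (d : ℝ) ^ 2) ^ (d - u + 1) := by
    exact_mod_cast choose_two_pow_le hd hu2
  calc _ ≤ ((n.choose (u - 1) : ℝ) * u ^ (u - 1)) * ((u + 1).choose 2 ^ (d + 1 - u) : ℕ) := by
        rw [mul_assoc]
        exact_mod_cast ncard_connected_multigraphs_le _ d u
    _ ≤ (Real.exp 1 * n) ^ (u - 1) * (3 * (d : ℝ) ^ 2) ^ (d - u + 1) :=
        mul_le_mul htree hextra (by positivity) (by positivity)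
    _ ≤ _ := by
        rw [mul_assoc]
        exact le_mul_of_one_le_left (by positivity) one_le_two

/-- **Lemma E.2 (refined count of connected multigraphs).** For `d ≥ 1` and `1 ≤ u ≤ d+1`,
the number of connected multigraphs on `[n]` with `d` edges, spanning vertex `1`, and
spanning exactly `u` vertices, is at most `2·(e·n)^{u−1}·(3d²)^{d−u+1}`. -/
theorem count_connected_multigraphs_refined {n : ℕ} (hn : 0 < n) (d u : ℕ) (hd : 1 ≤ d)
    (hu1 : 1 ≤ u) (hu2 : u ≤ d + 1) :
    ((Set.ncard {α : Sym2 (Fin n) → ℕ |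
        mgEdges α = d ∧ mgConnected α ∧ (⟨0, hn⟩ : Fin n) ∈ mgVerts α ∧
        (mgVerts α).ncard = u} : ℕ) : ℝ)
      ≤ 2 * (Real.exp 1 * n) ^ (u - 1) * (3 * (d : ℝ) ^ 2) ^ (d - u + 1) :=
  count_connected_multigraphs_refined_general hn d u hd hu2
end
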